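/- arXiv:1408.0191 — 2 statements merged into one kernel-verified Lean document; each statement's English description precedes it below -/
import Mathlib

section
/- Let K be a field of characteristic p and let γ be the K-semilinear situation: G' = Z/pZ acts on K[x] by a K'-algebra automorphism γ with γ|_K = id_K and γ(x) = x + b for some b ∈ K, b ≠ 0. Then the invariant ring K[x]^{G'} equals K[x + (p-1) b^{1-p} x^p], which is a polynomial ring in one variable over K. -/
/-!
Translation by `b` fixes `h = X ^ p - b ^ (p - 1) • X`, since the Frobenius is additive, and `h`
is monic of degree `p`. An invariant polynomial `f` of degree `< p` is constant, because
`f - f(0)` vanishes at the `p` distinct points `k • b`. Division with remainder by `h` commutes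
with translation, so by induction on the degree every invariant is a polynomial in `h`. The given
generator is the unit multiple `-b ^ (1 - p) • h`, and `h` is transcendental over `K`.
-/

open Polynomial

theorem Algebra.adjoin_singleton_smul_of_isUnit {R A : Type*} [CommSemiring R] [Semiring A]
    [Algebra R A] {c : R} (hc : IsUnit c) (x : A) :
    Algebra.adjoin R {c • x} = Algebra.adjoin R {x} := by
  obtain ⟨u, rfl⟩ := hc
  refine le_antisymm
    (adjoin_singleton_le (Subalgebra.smul_mem _ (self_mem_adjoin_singleton R x) _))
    (adjoin_singleton_le ?_)
  simpa only [smul_smul, Units.inv_mul, one_smul] using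
    Subalgebra.smul_mem _ (self_mem_adjoin_singleton R ((u : R) • x)) (↑u⁻¹ : R)

namespace Polynomial

section CommRing

variable {R : Type*} [CommRing R]

/-- The ring `K[x]^{G'}`: `taylor b` is the substitution `X ↦ X + C b`. -/
noncomputable def taylorInvariants (b : R) : Subalgebra R R[X] :=
  AlgHom.equalizer (taylorAlgHom b) (AlgHom.id R R[X])

variable {b : R} {f h : R[X]}

theorem mem_taylorInvariants : f ∈ taylorInvariants b ↔ taylor b f = f := Iff.rfl

theorem periodic_eval_of_mem_taylorInvariants (hf : f ∈ taylorInvariants b) :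
    Function.Periodic (fun x ↦ f.eval x) b := fun x ↦ by
  simp only [← taylor_eval, mem_taylorInvariants.mp hf]

theorem taylor_divByMonic_and_modByMonic [Nontrivial R] (hh : h.Monic) (hinv : taylor b h = h) :
    taylor b f /ₘ h = taylor b (f /ₘ h) ∧ taylor b f %ₘ h = taylor b (f %ₘ h) := by
  refine div_modByMonic_unique _ _ hh ⟨?_, ?_⟩
  · simpa only [map_add, taylor_mul, hinv] using congrArg (taylor b) (modByMonic_add_div f h)
  · rw [degree_taylor]
    exact degree_modByMonic_lt f hh

theorem divByMonic_mem_taylorInvariants [Nontrivial R] (hh : h.Monic) (hinv : taylor b h = h)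
    (hf : f ∈ taylorInvariants b) : f /ₘ h ∈ taylorInvariants b := by
  rw [mem_taylorInvariants, ← (taylor_divByMonic_and_modByMonic hh hinv).1,
    mem_taylorInvariants.mp hf]

theorem modByMonic_mem_taylorInvariants [Nontrivial R] (hh : h.Monic) (hinv : taylor b h = h)
    (hf : f ∈ taylorInvariants b) : f %ₘ h ∈ taylorInvariants b := by
  rw [mem_taylorInvariants, ← (taylor_divByMonic_and_modByMonic hh hinv).2,
    mem_taylorInvariants.mp hf]

theorem taylorInvariants_eq_adjoin (hh : h.Monic) (hinv : taylor b h = h)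
    (hdeg : 0 < h.natDegree) (hsmall : ∀ f ∈ taylorInvariants b,
      f.natDegree < h.natDegree → f ∈ (⊥ : Subalgebra R R[X])) :
    taylorInvariants b = Algebra.adjoin R {h} := by
  nontriviality R
  refine le_antisymm (fun f hf ↦ ?_) (Algebra.adjoin_singleton_le hinv)
  induction hn : f.natDegree using Nat.strong_induction_on generalizing f with
  | _ n ih =>
    by_cases hlt : f.natDegree < h.natDegree
    · exact SetLike.le_def.mp bot_le (hsmall f hf hlt)
    have hquot : (f /ₘ h).natDegree < n := by
      rw [natDegree_divByMonic f hh]; omega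
    have hrem : f %ₘ h ∈ (⊥ : Subalgebra R R[X]) :=
      hsmall _ (modByMonic_mem_taylorInvariants hh hinv hf)
        (natDegree_modByMonic_lt f hh fun h1 ↦ by simp [h1] at hdeg)
    rw [← modByMonic_add_div f h]
    exact add_mem (SetLike.le_def.mp bot_le hrem)
      (mul_mem (Algebra.self_mem_adjoin_singleton R h)
        (ih _ hquot _ (divByMonic_mem_taylorInvariants hh hinv hf) rfl))

theorem eq_C_eval_zero_of_mem_taylorInvariants [IsDomain R] {p : ℕ} [CharP R p] (hb : b ≠ 0)
    (hf : f ∈ taylorInvariants b) (hdeg : f.natDegree < p) : f = C (f.eval 0) := by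
  have hinj : Function.Injective fun i : Fin p ↦ ((i : ℕ) : R) * b := fun i j hij ↦
    Fin.ext (CharP.natCast_injOn_Iio R p i.2 j.2 (mul_right_cancel₀ hb hij))
  refine eq_of_natDegree_lt_card_of_eval_eq _ _ hinj (fun i ↦ ?_) (by simpa using hdeg)
  simpa using (periodic_eval_of_mem_taylorInvariants hf).nat_mul_eq i

end CommRing

section XPowSubCMulX

variable {R : Type*} [CommRing R] {p : ℕ}

theorem monic_X_pow_sub_C_mul_X (hp : 1 < p) (d : R) : (X ^ p - C d * X).Monic :=
  monic_X_pow_sub ((degree_C_mul_X_le d).trans_lt (by exact_mod_cast hp))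

theorem natDegree_X_pow_sub_C_mul_X [Nontrivial R] (hp : 1 < p) (d : R) :
    (X ^ p - C d * X).natDegree = p := by
  have hlt : (C d * X).natDegree < (X ^ p : R[X]).natDegree := by
    rw [natDegree_X_pow]
    exact (natDegree_C_mul_le d X).trans_lt (by rwa [natDegree_X])
  rw [natDegree_sub_eq_left_of_natDegree_lt hlt, natDegree_X_pow]

theorem taylor_X_pow_sub_C_mul_X [Fact p.Prime] [CharP R p] (b : R) :
    taylor b (X ^ p - C (b ^ (p - 1)) * X) = X ^ p - C (b ^ (p - 1)) * X := by
  have hbp : b ^ (p - 1) * b = b ^ p := pow_sub_one_mul (Fact.out : p.Prime).ne_zero b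
  simp only [map_sub, taylor_X_pow, taylor_mul, taylor_C, taylor_X, add_pow_char, ← C_pow,
    mul_add, ← C_mul, hbp]
  ring

theorem taylorInvariants_eq_adjoin_X_pow_sub_C_mul_X [IsDomain R] [Fact p.Prime] [CharP R p]
    {b : R} (hb : b ≠ 0) :
    taylorInvariants b = Algebra.adjoin R {X ^ p - C (b ^ (p - 1)) * X} := by
  have hp : 1 < p := (Fact.out : p.Prime).one_lt
  refine taylorInvariants_eq_adjoin (monic_X_pow_sub_C_mul_X hp _) (taylor_X_pow_sub_C_mul_X b)
    (by rw [natDegree_X_pow_sub_C_mul_X hp]; omega) fun f hf hdeg ↦ ?_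
  rw [natDegree_X_pow_sub_C_mul_X hp] at hdeg
  rw [eq_C_eval_zero_of_mem_taylorInvariants hb hf hdeg]
  exact (⊥ : Subalgebra R R[X]).algebraMap_mem _

end XPowSubCMulX

end Polynomial

/-- Let `K` be a field of characteristic `p > 0` and let `γ` be the `K`-algebra automorphism
of `K[x]` with `γ(x) = x + b`, `b ≠ 0` (so `γ(f) = f(x + b)` and `γ` generates
`G' = ℤ/pℤ`).  Then the invariant ring `K[x]^{G'}` equals
`K[x + (p-1)·b^{1-p}·x^p]`, a polynomial ring in one variable over `K`. -/
theorem invariants_of_nonzero_translation (K : Type*) [Field K] (p : ℕ) [Fact p.Prime]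
    [CharP K p] (b : K) (hb : b ≠ 0) :
    (∀ f : K[X], f.comp (X + C b) = f ↔
        f ∈ Algebra.adjoin K
          {(X : K[X]) + C (((p : K) - 1) * b ^ ((1 : ℤ) - (p : ℤ))) * X ^ p}) ∧
      Nonempty ((Algebra.adjoin K
          {(X : K[X]) + C (((p : K) - 1) * b ^ ((1 : ℤ) - (p : ℤ))) * X ^ p}) ≃ₐ[K] K[X]) := by
  have hp : 1 < p := (Fact.out : p.Prime).one_lt
  set d := b ^ (p - 1)
  have hd : d ≠ 0 := pow_ne_zero _ hb
  have hc : ((p : K) - 1) * b ^ ((1 : ℤ) - (p : ℤ)) = -d⁻¹ := by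
    rw [CharP.cast_eq_zero, zero_sub, neg_one_mul,
      show (1 : ℤ) - p = -((p - 1 : ℕ) : ℤ) by omega, zpow_neg, zpow_natCast]
  have hcd : C (-d⁻¹) * C d = (-1 : K[X]) := by
    rw [← C_mul, neg_mul, inv_mul_cancel₀ hd, C_neg, C_1]
  have hgen : (X : K[X]) + C (((p : K) - 1) * b ^ ((1 : ℤ) - (p : ℤ))) * X ^ p =
      (-d⁻¹) • (X ^ p - C d * X) := by
    rw [hc, smul_eq_C_mul]
    linear_combination X * hcd
  rw [hgen, Algebra.adjoin_singleton_smul_of_isUnit (by simpa using hd),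
    ← taylorInvariants_eq_adjoin_X_pow_sub_C_mul_X hb]
  refine ⟨fun f ↦ by rw [mem_taylorInvariants, taylor_apply], ?_⟩
  rw [taylorInvariants_eq_adjoin_X_pow_sub_C_mul_X hb]
  exact ⟨(algEquivOfTranscendental K _ <| Polynomial.transcendental _
    (by rw [natDegree_X_pow_sub_C_mul_X hp]; omega)
    (by rw [(monic_X_pow_sub_C_mul_X hp d).leadingCoeff]; exact one_mem _)).symm⟩
end

section
/- Let k be a field of characteristic p > 0 and let G = Z/pZ act on the polynomial ring k[x,y] by the k-algebra automorphism σ with σ(x) = x + y, σ(y) = y. Then the invariant ring k[x,y]^G equals k[x^p + (p-1) x y^{p-1}, y], and this invariant ring is isomorphic as a k-algebra to a polynomial ring in two variables. -/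
/-!
Writing `k[x,y] = A[x]` with `A = k[y]`, the automorphism `σ` is the Taylor shift `g(x) ↦ g(x + y)`.
The polynomial `N = x^p - y^{p-1} x = ∏_{i ∈ 𝔽_p} (x + i y)` is a monic shift-invariant of degree `p`.
A shift-invariant of degree `< p` takes the same value at the `p` distinct points `i y`, so it is
constant in `x`; dividing an arbitrary invariant by `N` with remainder, quotient and remainder are
again invariant by uniqueness of division, and induction on the degree shows that the invariants
are exactly `A[N] = k[N, y]`. Since `N` has positive degree in `x`, `q ↦ q ∘ N` is injective, so
`N` and `y` are algebraically independent.
-/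

open MvPolynomial

/-- The `k`-algebra automorphism `σ` of `k[x,y]` with `σ(x) = x + y`, `σ(y) = y`. -/
noncomputable def sigmaMap (k : Type*) [CommRing k] :
    MvPolynomial (Fin 2) k →ₐ[k] MvPolynomial (Fin 2) k :=
  MvPolynomial.aeval ![X 0 + X 1, X 1]

namespace Polynomial

variable {A : Type*} [CommRing A]

noncomputable def shearNorm (p : ℕ) (c : A) : A[X] :=
  X ^ p - C (c ^ (p - 1)) * X

theorem monic_shearNorm [Nontrivial A] {p : ℕ} (hp : 1 < p) (c : A) : (shearNorm p c).Monic :=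
  monic_X_pow_sub ((degree_C_mul_X_le _).trans_lt (by exact_mod_cast hp))

theorem natDegree_shearNorm [Nontrivial A] {p : ℕ} (hp : 1 < p) (c : A) :
    (shearNorm p c).natDegree = p := by
  rw [shearNorm, natDegree_sub_eq_left_of_natDegree_lt] <;> rw [natDegree_X_pow]
  exact (natDegree_C_mul_le _ _).trans_lt (natDegree_X_le.trans_lt hp)

theorem taylor_shearNorm {p : ℕ} [Fact p.Prime] [CharP A p] (c : A) :
    taylor c (shearNorm p c) = shearNorm p c := by
  have hC : C (c ^ p) = C (c ^ (p - 1)) * C c := by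
    rw [← C_mul, ← pow_succ, Nat.sub_add_cancel (Fact.out : p.Prime).one_le]
  simp only [shearNorm, taylor_apply, sub_comp, pow_comp, X_comp, mul_comp, C_comp,
    add_pow_char, ← C_pow, hC]
  ring

theorem eval_natCast_mul_of_taylor_eq_self {c : A} {g : A[X]} (hg : taylor c g = g) (n : ℕ) :
    g.eval (n * c) = g.eval 0 := by
  induction n with
  | zero => simp
  | succ n ih =>
    conv_rhs => rw [← ih, ← hg, taylor_eval]
    push_cast
    ring_nf

theorem eq_C_of_taylor_eq_self [IsDomain A] {p : ℕ} [Fact p.Prime] [CharP A p] {c : A}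
    (hc : c ≠ 0) {g : A[X]} (hg : taylor c g = g) (hdeg : g.natDegree < p) :
    g = C (g.coeff 0) := by
  have hinj : Function.Injective fun i : ZMod p => ZMod.castHom dvd_rfl A i * c :=
    fun i j hij => (ZMod.castHom dvd_rfl A).injective (mul_right_cancel₀ hc hij)
  refine eq_of_natDegree_lt_card_of_eval_eq g _ hinj (fun i => ?_) (by simpa [ZMod.card])
  rw [ZMod.castHom_apply, ← ZMod.natCast_val, eval_natCast_mul_of_taylor_eq_self hg, eval_C,
    coeff_zero_eq_eval_zero]

theorem taylor_divByMonic_modByMonic_eq_self {c : A} {N g : A[X]} (hN : N.Monic)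
    (hNc : taylor c N = N) (hg : taylor c g = g) :
    taylor c (g /ₘ N) = g /ₘ N ∧ taylor c (g %ₘ N) = g %ₘ N := by
  nontriviality A
  have h := div_modByMonic_unique (f := g) (taylor c (g /ₘ N)) (taylor c (g %ₘ N)) hN
    ⟨by
      conv_rhs => rw [← hg, ← modByMonic_add_div g N]
      rw [map_add, taylor_mul, hNc],
      by rw [degree_taylor]; exact degree_modByMonic_lt _ hN⟩
  exact ⟨h.1.symm, h.2.symm⟩

theorem exists_comp_shearNorm_eq_of_taylor_eq_self [IsDomain A] {p : ℕ} [Fact p.Prime]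
    [CharP A p] {c : A} (hc : c ≠ 0) {g : A[X]} (hg : taylor c g = g) :
    ∃ q : A[X], q.comp (shearNorm p c) = g := by
  induction hd : g.natDegree using Nat.strong_induction_on generalizing g with
  | _ n ih =>
  have hp := (Fact.out : p.Prime).one_lt
  by_cases hlt : g.natDegree < p
  · exact ⟨C (g.coeff 0), by rw [C_comp, ← eq_C_of_taylor_eq_self hc hg hlt]⟩
  have hN := monic_shearNorm hp c
  have hN1 : shearNorm p c ≠ 1 := fun h => by
    have := natDegree_shearNorm (A := A) hp c
    rw [h, natDegree_one] at this
    omega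
  obtain ⟨hq, hr⟩ := taylor_divByMonic_modByMonic_eq_self hN (taylor_shearNorm c) hg
  obtain ⟨q, hq⟩ := ih _ (by rw [natDegree_divByMonic _ hN, natDegree_shearNorm hp]; omega) hq rfl
  have hr' := eq_C_of_taylor_eq_self hc hr <| by
    simpa [natDegree_shearNorm hp] using natDegree_modByMonic_lt g hN hN1
  refine ⟨C ((g %ₘ shearNorm p c).coeff 0) + X * q, ?_⟩
  rw [add_comp, C_comp, mul_comp, X_comp, hq, ← hr', modByMonic_add_div]

theorem taylor_eq_self_iff_exists_comp_shearNorm [IsDomain A] {p : ℕ} [Fact p.Prime]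
    [CharP A p] {c : A} (hc : c ≠ 0) {g : A[X]} :
    taylor c g = g ↔ ∃ q : A[X], q.comp (shearNorm p c) = g :=
  ⟨exists_comp_shearNorm_eq_of_taylor_eq_self hc, by
    rintro ⟨q, rfl⟩
    rw [taylor_apply, comp_assoc, ← taylor_apply, taylor_shearNorm]⟩

theorem comp_shearNorm_injective [IsDomain A] {p : ℕ} (hp : 1 < p) (c : A) :
    Function.Injective fun q : A[X] => q.comp (shearNorm p c) := by
  refine (injective_iff_map_eq_zero (compRingHom (shearNorm p c))).2 fun q hq => ?_
  refine (comp_eq_zero_iff.1 hq).resolve_right fun ⟨_, h⟩ => ?_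
  have := congrArg natDegree h
  rw [natDegree_shearNorm hp, natDegree_C] at this
  omega

end Polynomial

theorem finSuccEquiv_X_one (R : Type*) [CommRing R] :
    finSuccEquiv R 1 (X 1) = Polynomial.C (X 0) :=
  finSuccEquiv_X_succ (j := 0)

open Polynomial in
theorem finSuccEquiv_sigmaMap (k : Type*) [CommRing k] (f : MvPolynomial (Fin 2) k) :
    finSuccEquiv k 1 (sigmaMap k f) = taylor (X 0) (finSuccEquiv k 1 f) := by
  have h : ((taylorAlgHom (X 0)).restrictScalars k).comp (finSuccEquiv k 1).toAlgHom =
      (finSuccEquiv k 1).toAlgHom.comp (sigmaMap k) := by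
    ext i : 1
    fin_cases i <;> simp [sigmaMap, finSuccEquiv_X_zero, finSuccEquiv_X_one, taylor_X]
  simpa using (DFunLike.congr_fun h f).symm

theorem finSuccEquiv_aeval_X_one (k : Type*) [CommRing k] (F f : MvPolynomial (Fin 2) k) :
    finSuccEquiv k 1 (aeval ![F, X 1] f) = (finSuccEquiv k 1 f).comp (finSuccEquiv k 1 F) := by
  have h : ((Polynomial.aeval (finSuccEquiv k 1 F)).restrictScalars k).comp
      (finSuccEquiv k 1).toAlgHom = (finSuccEquiv k 1).toAlgHom.comp (aeval ![F, X 1]) := by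
    ext i : 1
    fin_cases i <;> simp [finSuccEquiv_X_zero, finSuccEquiv_X_one]
  simpa [Polynomial.comp_eq_aeval] using (DFunLike.congr_fun h f).symm

theorem finSuccEquiv_shearInvariant (k : Type*) [CommRing k] (p : ℕ) [CharP k p] :
    finSuccEquiv k 1 (X 0 ^ p + C ((p : k) - 1) * (X 0 * X 1 ^ (p - 1))) =
      Polynomial.shearNorm p (X 0) := by
  rw [CharP.cast_eq_zero, zero_sub, C_neg, C_1]
  simp only [map_add, map_mul, map_pow, map_neg, map_one, finSuccEquiv_X_zero, finSuccEquiv_X_one,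
    Polynomial.shearNorm]
  ring

/-- Let `k` be a field of characteristic `p > 0` and let `G = ℤ/pℤ` act on `k[x,y]` by
`σ(x) = x + y`, `σ(y) = y`.  Then the invariant ring `k[x,y]^G` equals
`k[x^p + (p-1)·x·y^{p-1}, y]`, and this invariant ring is isomorphic as a `k`-algebra to a
polynomial ring in two variables. -/
theorem invariants_of_shear_action (k : Type*) [Field k] (p : ℕ) [Fact p.Prime]
    [CharP k p] :
    (∀ f : MvPolynomial (Fin 2) k, sigmaMap k f = f ↔
        f ∈ Algebra.adjoin k
          {(X 0 : MvPolynomial (Fin 2) k) ^ p + C ((p : k) - 1) * (X 0 * X 1 ^ (p - 1)),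
            X 1}) ∧
      Nonempty ((Algebra.adjoin k
          {(X 0 : MvPolynomial (Fin 2) k) ^ p + C ((p : k) - 1) * (X 0 * X 1 ^ (p - 1)),
            X 1}) ≃ₐ[k] MvPolynomial (Fin 2) k) := by
  set N : MvPolynomial (Fin 2) k := X 0 ^ p + C ((p : k) - 1) * (X 0 * X 1 ^ (p - 1))
  set e := finSuccEquiv k 1
  have hconj (f : MvPolynomial (Fin 2) k) :
      e (aeval ![N, X 1] f) = (e f).comp (Polynomial.shearNorm p (X 0)) := by
    rw [finSuccEquiv_aeval_X_one, finSuccEquiv_shearInvariant]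
  have hadjoin : Algebra.adjoin k {N, X 1} = (aeval ![N, X 1]).range := by
    rw [aeval_range, Matrix.range_cons_cons_empty]
  have hinj : Function.Injective (aeval ![N, X 1]) := fun f g h =>
    e.injective <| Polynomial.comp_shearNorm_injective (Fact.out : p.Prime).one_lt _ <| by
      simpa only [hconj] using congrArg e h
  refine ⟨fun f => ?_,
    ⟨(Subalgebra.equivOfEq _ _ hadjoin).trans (AlgEquiv.ofInjective _ hinj).symm⟩⟩
  rw [hadjoin, AlgHom.mem_range, ← e.injective.eq_iff, finSuccEquiv_sigmaMap,
    Polynomial.taylor_eq_self_iff_exists_comp_shearNorm (X_ne_zero 0), e.surjective.exists]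
  simp only [← hconj]
  exact exists_congr fun _ => e.injective.eq_iff
end
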